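/- Conversely, if A is symmetric positive semidefinite, B has full row rank, and xᵀAx > 0 for all nonzero x in the kernel of B, then the saddle point matrix [[A, Bᵀ],[B, 0]] is invertible. -/
import Mathlib

open Matrix

theorem stmt16 (n m : ℕ) (A : Matrix (Fin n) (Fin n) ℝ) (B : Matrix (Fin m) (Fin n) ℝ)
    (hA : A.PosSemidef) (hB : B.rank = m)
    (hker : ∀ x : Fin n → ℝ, x ≠ 0 → B.mulVec x = 0 → 0 < x ⬝ᵥ A.mulVec x) :
    IsUnit (Matrix.fromBlocks A Bᵀ B (0 : Matrix (Fin m) (Fin m) ℝ)) := by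
  -- Bᵀ has injective mulVec since rank B = m
  have hBt : Function.Injective (Bᵀ.mulVecLin) := by
    rw [← LinearMap.ker_eq_bot]
    have h1 := LinearMap.finrank_range_add_finrank_ker (Bᵀ.mulVecLin)
    have h2 : Module.finrank ℝ ↥(LinearMap.range Bᵀ.mulVecLin) = m := by
      have := B.rank_transpose
      rw [hB] at this
      simpa [Matrix.rank] using this
    rw [h2, Module.finrank_fintype_fun_eq_card, Fintype.card_fin] at h1
    have h3 : Module.finrank ℝ ↥(LinearMap.ker Bᵀ.mulVecLin) = 0 := by omega
    exact Submodule.finrank_eq_zero.mp h3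
  have key : ∀ v : Fin n ⊕ Fin m → ℝ,
      (Matrix.fromBlocks A Bᵀ B (0 : Matrix (Fin m) (Fin m) ℝ)) *ᵥ v = 0 → v = 0 := by
    intro v hv
    set x := v ∘ Sum.inl with hx
    set y := v ∘ Sum.inr with hy
    rw [Matrix.fromBlocks_mulVec] at hv
    have h1 : A *ᵥ x + Bᵀ *ᵥ y = 0 := by
      funext i
      have := congrFun hv (Sum.inl i)
      simpa using this
    have h2 : B *ᵥ x = 0 := by
      funext i
      have := congrFun hv (Sum.inr i)
      simpa using this
    have hxAx : x ⬝ᵥ A *ᵥ x = 0 := by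
      have e : x ⬝ᵥ (Bᵀ *ᵥ y) = (B *ᵥ x) ⬝ᵥ y := by
        rw [Matrix.dotProduct_mulVec, Matrix.vecMul_transpose]
      have : x ⬝ᵥ (A *ᵥ x + Bᵀ *ᵥ y) = 0 := by rw [h1, dotProduct_zero]
      rw [dotProduct_add, e, h2, zero_dotProduct, add_zero] at this
      exact this
    have hx0 : x = 0 := by
      by_contra hxne
      exact absurd hxAx (ne_of_gt (hker x hxne h2))
    have hy0 : y = 0 := by
      have : Bᵀ *ᵥ y = 0 := by
        have := h1
        rw [hx0, Matrix.mulVec_zero, zero_add] at this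
        exact this
      apply hBt
      rw [map_zero, Matrix.mulVecLin_apply]
      exact this
    funext i
    cases i with
    | inl i => exact congrFun hx0 i
    | inr i => exact congrFun hy0 i
  rw [← Matrix.mulVec_injective_iff_isUnit]
  intro u w huw
  have : (Matrix.fromBlocks A Bᵀ B (0 : Matrix (Fin m) (Fin m) ℝ)) *ᵥ (u - w) = 0 := by
    rw [Matrix.mulVec_sub, huw, sub_self]
  have := key _ this
  exact sub_eq_zero.mp this
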